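/- In any turn-based game structure satisfying formulas (1)–(5) of the reduction, the formula (6), AG[(m ∧ □) ⇒ [1]((⟨2⟩X³(v₁ ∧ Xα) ∧ ⟨2⟩X³(v₂ ∧ Xα)) ⇒ [2]⟨∅⟩X³Xα)], forces every cell of the grid to have exactly two successor cells: one whose entry state is labelled v₁ and one whose entry state is labelled v₂. In particular, if some cell had three or more successor cells, Player 1 would have a memoryless strategy colouring one v₁-successor cell and one v₂-successor cell with α and a third successor cell with β, against which Player 2 would have a memoryless strategy reaching a β-coloured successor cell, violating the formula. -/

import Mathlib

/-!
# ATL with strategy contexts and memoryless strategies (ATL_sc^0)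

Players and atomic propositions are coded as natural numbers.
-/

/-- A concurrent game structure: states labelled with atomic propositions (coded as
naturals), players coded as naturals, and a transition function assigning to each state
and each tuple of moves (one move per player) a successor state. -/
structure CGS : Type 1 where
  State : Type
  Move : Type
  move_nonempty : Nonempty Move
  label : State → ℕ → Prop
  trans : State → (ℕ → Move) → State

/-- Player `p` controls state `s`: the successor from `s` only depends on `p`'s move. -/
def Controls (G : CGS) (p : ℕ) (s : G.State) : Prop :=
  ∀ mv mv' : ℕ → G.Move, mv p = mv' p → G.trans s mv = G.trans s mv'

/-- A game structure is turn-based if every state is controlled by a single player. -/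
def TurnBased (G : CGS) : Prop := ∀ s : G.State, ∃ p : ℕ, Controls G p s

/-- A (memoryless) strategy context: a partial assignment of memoryless strategies
(functions from states to moves) to players. -/
def Ctx (G : CGS) : Type := ℕ → Option (G.State → G.Move)

/-- The empty strategy context. -/
def emptyCtx (G : CGS) : Ctx G := fun _ => none

/-- `π` is an outcome from state `s` compatible with the memoryless context `ctx`:
at each step, every player to whom `ctx` assigns a strategy plays according to it. -/
def IsOutcome (G : CGS) (ctx : Ctx G) (s : G.State) (π : ℕ → G.State) : Prop :=
  π 0 = s ∧ ∀ i : ℕ, ∃ mv : ℕ → G.Move,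
    (∀ p σ, ctx p = some σ → mv p = σ (π i)) ∧ π (i + 1) = G.trans (π i) mv

/-- Formulas of ATL_sc^0 (with LTL path modalities `X` and `U`); coalitions are
finite lists of players. -/
inductive Formula : Type where
  | atom : ℕ → Formula
  | neg : Formula → Formula
  | conj : Formula → Formula → Formula
  | next : Formula → Formula
  | untl : Formula → Formula → Formula
  | strat : List ℕ → Formula → Formula

/-- Satisfaction of a formula on a path, under a memoryless strategy context.
`strat A φ` (the quantifier `⟨A⟩φ`) assigns new memoryless strategies to the players
of `A`, keeps the strategies of the other players from the current context, and
requires `φ` on all outcomes compatible with the resulting context. -/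
def sat (G : CGS) : Formula → Ctx G → (ℕ → G.State) → Prop
  | .atom p, _, π => G.label (π 0) p
  | .neg φ, ctx, π => ¬ sat G φ ctx π
  | .conj φ ψ, ctx, π => sat G φ ctx π ∧ sat G ψ ctx π
  | .next φ, ctx, π => sat G φ ctx (fun n => π (n + 1))
  | .untl φ ψ, ctx, π => ∃ j : ℕ, sat G ψ ctx (fun n => π (n + j)) ∧
      ∀ k < j, sat G φ ctx (fun n => π (n + k))
  | .strat A φ, ctx, π => ∃ ctx' : Ctx G,
      (∀ p, p ∉ A → ctx' p = ctx p) ∧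
      (∀ p, p ∈ A → ∃ σ, ctx' p = some σ) ∧
      ∀ π' : ℕ → G.State, IsOutcome G ctx' (π 0) π' → sat G φ ctx' π'

/-- A state satisfies a formula (under a given context) if the formula holds on all
outcomes from that state compatible with the context. -/
def StateSatCtx (G : CGS) (ctx : Ctx G) (s : G.State) (φ : Formula) : Prop :=
  ∀ π : ℕ → G.State, IsOutcome G ctx s π → sat G φ ctx π

/-- A state satisfies a formula under the empty strategy context. -/
def StateSat (G : CGS) (s : G.State) (φ : Formula) : Prop :=
  StateSatCtx G (emptyCtx G) s φ

/-- Satisfiability of an ATL_sc^0 formula in a turn-based game structure. -/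
def SatTB (φ : Formula) : Prop :=
  ∃ G : CGS, TurnBased G ∧ ∃ s : G.State, StateSat G s φ

/-- An explicit injective encoding of formulas as natural numbers. -/
def encodeF : Formula → ℕ
  | .atom n => Nat.pair 0 n
  | .neg φ => Nat.pair 1 (encodeF φ)
  | .conj φ ψ => Nat.pair 2 (Nat.pair (encodeF φ) (encodeF ψ))
  | .next φ => Nat.pair 3 (encodeF φ)
  | .untl φ ψ => Nat.pair 4 (Nat.pair (encodeF φ) (encodeF ψ))
  | .strat A φ => Nat.pair 5 (Nat.pair (Encodable.encode A) (encodeF φ))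


namespace Formula

/-- Disjunction. -/
def fOr (φ ψ : Formula) : Formula := neg (conj (neg φ) (neg ψ))
/-- Implication. -/
def fImp (φ ψ : Formula) : Formula := fOr (neg φ) ψ
/-- Bi-implication. -/
def fIff (φ ψ : Formula) : Formula := conj (fImp φ ψ) (fImp ψ φ)
/-- True. -/
def top : Formula := fOr (atom 0) (neg (atom 0))
/-- False. -/
def bot : Formula := neg top
/-- Eventually (`F`). -/
def fut (φ : Formula) : Formula := untl top φ
/-- Globally (`G`). -/
def glob (φ : Formula) : Formula := neg (fut (neg φ))
/-- Weak until (`W`): `G φ ∨ φ U ψ`. -/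
def wuntl (φ ψ : Formula) : Formula := fOr (glob φ) (untl φ ψ)
/-- Finite disjunction. -/
def bigOr (l : List Formula) : Formula := l.foldr fOr bot
/-- Finite conjunction. -/
def bigAnd (l : List Formula) : Formula := l.foldr conj top
/-- Universal path quantification `A`, encoded as `⟨∅⟩`. -/
def Aq (φ : Formula) : Formula := strat [] φ
/-- Existential path quantification `E`. -/
def Eq (φ : Formula) : Formula := neg (Aq (neg φ))
/-- The strategy quantifier `⟨p⟩` for a single player `p`. -/
def D (p : ℕ) (φ : Formula) : Formula := strat [p] φ
/-- The dual quantifier `[p]` over memoryless strategies of player `p`. -/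
def B (p : ℕ) (φ : Formula) : Formula := neg (D p (neg φ))
/-- Two nested next modalities. -/
def X2 (φ : Formula) : Formula := next (next φ)
/-- Three nested next modalities. -/
def X3 (φ : Formula) : Formula := next (X2 φ)
/-- Four nested next modalities. -/
def X4 (φ : Formula) : Formula := next (X3 φ)

end Formula

open Formula

/-! Coding of the atomic propositions `{m, c, v₁, v₂, α, β, □, ○} ∪ T`:
`m ↦ 0`, `c ↦ 1`, `v₁ ↦ 2`, `v₂ ↦ 3`, `α ↦ 4`, `β ↦ 5`, `□ ↦ 6`, `○ ↦ 7`,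
and tile `t ↦ 8 + t`. -/

def pm : Formula := Formula.atom 0
def pc : Formula := Formula.atom 1
def pv1 : Formula := Formula.atom 2
def pv2 : Formula := Formula.atom 3
def pal : Formula := Formula.atom 4
def pbe : Formula := Formula.atom 5
def psq : Formula := Formula.atom 6
def pci : Formula := Formula.atom 7
def ptile (t : ℕ) : Formula := Formula.atom (8 + t)

/-- A tile system: tiles are `0, …, numTiles - 1`, with horizontal and vertical
matching relations given as finite lists of pairs. -/
structure TileSystem : Type where
  numTiles : ℕ
  H : List (ℕ × ℕ)
  V : List (ℕ × ℕ)

/-- The tile system admits a tiling of the quadrant ℕ×ℕ. -/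
def TilesQuadrant (ts : TileSystem) : Prop :=
  ∃ τ : ℕ → ℕ → ℕ, (∀ i j, τ i j < ts.numTiles) ∧
    (∀ i j, (τ i j, τ (i + 1) j) ∈ ts.H) ∧
    (∀ i j, (τ i j, τ i (j + 1)) ∈ ts.V)

/-- An explicit encoding of tile systems as natural numbers. -/
def encodeTS (ts : TileSystem) : ℕ := Encodable.encode (ts.numTiles, ts.H, ts.V)

/-- The list of tiles of a tile system. -/
def tilesOf (ts : TileSystem) : List ℕ := List.range ts.numTiles

/-- The atomic propositions `AP' = {m, c} ∪ T`. -/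
def APprime (ts : TileSystem) : List ℕ := 0 :: 1 :: (tilesOf ts).map (fun t => 8 + t)

/-- The atomic propositions `AP = AP' ∪ {v₁, v₂, α, β, □, ○}`. -/
def APall (ts : TileSystem) : List ℕ := APprime ts ++ [2, 3, 4, 5, 6, 7]

/-- Formula (1): labelling discipline (each state has exactly one proposition of `AP'`),
`A(m W c)`, the shape of choice and tile states, and turn-basedness via
`□ ⇔ ¬○` and `EX p ⇔ ⟨i⟩X p`. -/
def phi1 (ts : TileSystem) : Formula :=
  bigAnd [
    Aq (glob (bigOr ((APprime ts).map fun p =>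
      conj (atom p) (bigAnd (((APprime ts).filter (· ≠ p)).map fun q => neg (atom q)))))),
    Aq (wuntl pm pc),
    Aq (glob (fImp pc (bigAnd [psq,
      bigAnd ((tilesOf ts).map fun t => D 1 (next (ptile t))),
      Aq (next (bigOr ((tilesOf ts).map fun t => Aq (glob (ptile t)))))]))),
    Aq (glob (bigAnd [
      fIff psq (neg pci),
      fImp psq (bigAnd ((APall ts).map fun p =>
        fIff (Eq (next (atom p))) (D 1 (next (atom p))))),
      fImp pci (bigAnd ((APall ts).map fun p =>
        fIff (Eq (next (atom p))) (D 2 (next (atom p)))))]))]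

/-- Formula (2): the four-state cell gadgets: entry `□`-states labelled `m` and
exactly one of `v₁, v₂`, middle `○`-states coloured `α` or `β` by Player 1,
exit `○`-states with neither colour. -/
def phi2 (_ts : TileSystem) : Formula :=
  bigAnd [
    Aq (glob (fImp pm (fOr (bigAnd [psq, neg pal, neg pbe])
      (conj pci (neg (conj pal pbe)))))),
    Aq (glob (conj (fImp (conj pm psq) (fIff pv1 (neg pv2)))
      (fImp (fOr pv1 pv2) (conj pm psq)))),
    Aq (glob (fImp (conj pm psq) (bigAnd [
      Aq (next (bigAnd [pm, pci, fOr pal pbe,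
        Aq (next (bigAnd [pm, pci, neg pal, neg pbe]))])),
      D 1 (next pal),
      D 1 (next pbe)])))]

/-- Formula (3): constraints on transitions leaving a cell. -/
def phi3 (_ts : TileSystem) : Formula :=
  bigAnd [
    Aq (glob (fImp (bigOr [Eq (next pc), Eq (next pv1), Eq (next pv2)])
      (bigAnd [pm, pci, neg pal, neg pbe]))),
    Aq (glob (fImp (bigAnd [pm, pci, neg pal, neg pbe])
      (bigAnd [Eq (next pc), Eq (next pv1), Eq (next pv2),
        Aq (next (bigOr [pc, pv1, pv2]))])))]

/-- Formula (4): the tiling constraints, under a memoryless strategy of Player 1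
choosing a tile for each cell (distances adapted to the four-state cell gadget). -/
def phi4 (ts : TileSystem) : Formula :=
  D 1 (glob (bigAnd [
    fImp pv1 (bigOr (ts.H.map fun p =>
      conj (D 2 (X4 (ptile p.1))) (D 2 (X3 (conj pv2 (X4 (ptile p.2))))))),
    fImp pv2 (bigOr (ts.H.map fun p =>
      conj (D 2 (X4 (ptile p.1))) (D 2 (X3 (conj pv1 (X4 (ptile p.2))))))),
    fImp pv1 (bigOr (ts.V.map fun p =>
      conj (D 2 (X4 (ptile p.1))) (D 2 (X3 (conj pv1 (X4 (ptile p.2))))))),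
    fImp pv2 (bigOr (ts.V.map fun p =>
      conj (D 2 (X4 (ptile p.1))) (D 2 (X3 (conj pv2 (X4 (ptile p.2)))))))]))

/-- Formula (5): `AG[(m ∧ □) ⇒ [2](⟨∅⟩X³(c ∨ v₁) ∨ ⟨∅⟩X³(c ∨ v₂))]`,
forcing each cell to have a single exit state. -/
def phi5 : Formula :=
  Aq (glob (fImp (conj pm psq)
    (B 2 (fOr (Aq (X3 (fOr pc pv1))) (Aq (X3 (fOr pc pv2)))))))

/-- Formula (6): `AG[(m ∧ □) ⇒ [1]((⟨2⟩X³(v₁ ∧ Xα) ∧ ⟨2⟩X³(v₂ ∧ Xα)) ⇒ [2]⟨∅⟩X³Xα)]`,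
forcing each cell to have exactly two successor cells. -/
def phi6 : Formula :=
  Aq (glob (fImp (conj pm psq)
    (B 1 (fImp (conj (D 2 (X3 (conj pv1 (next pal)))) (D 2 (X3 (conj pv2 (next pal)))))
      (B 2 (Aq (X3 (next pal))))))))

/-- Formula (7): `[1]⟨∅⟩G[(m ∧ □ ∧ v₁) ⇒ ((⟨2⟩X³(v₁ ∧ [2]X³Xα)) ⇒
(⟨2⟩X³(¬v₁ ∧ X³(¬v₁ ∧ Xα))))]` together with its `v₂`-counterpart, forcing the two
successor cells of every cell to share a common successor cell. -/
def phi7 : Formula :=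
  conj
    (B 1 (Aq (glob (fImp (bigAnd [pm, psq, pv1])
      (fImp (D 2 (X3 (conj pv1 (B 2 (X3 (next pal))))))
        (D 2 (X3 (conj (neg pv1) (X3 (conj (neg pv1) (next pal)))))))))))
    (B 1 (Aq (glob (fImp (bigAnd [pm, psq, pv2])
      (fImp (D 2 (X3 (conj pv2 (B 2 (X3 (next pal))))))
        (D 2 (X3 (conj (neg pv2) (X3 (conj (neg pv2) (next pal)))))))))))

/-- The reduction formula `Φ_{T,H,V}`: the conjunction of formulas (1)–(7), together
with the requirement that the initial state be a square state of a cell of the main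
part. -/
def Phi (ts : TileSystem) : Formula :=
  bigAnd [conj pm psq, phi1 ts, phi2 ts, phi3 ts, phi4 ts, phi5, phi6, phi7]

/-- The atomic propositions occurring in a formula. -/
def atomsOf : Formula → List ℕ
  | .atom n => [n]
  | .neg φ => atomsOf φ
  | .conj φ ψ => atomsOf φ ++ atomsOf ψ
  | .next φ => atomsOf φ
  | .untl φ ψ => atomsOf φ ++ atomsOf ψ
  | .strat _ φ => atomsOf φ

/-- The players occurring (in coalitions) in a formula. -/
def playersOf : Formula → List ℕ
  | .atom _ => []
  | .neg φ => playersOf φ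
  | .conj φ ψ => playersOf φ ++ playersOf ψ
  | .next φ => playersOf φ
  | .untl φ ψ => playersOf φ ++ playersOf ψ
  | .strat A φ => A ++ playersOf φ


/-- One-step successor relation of a game structure. -/
def Step (G : CGS) (s s' : G.State) : Prop := ∃ mv : ℕ → G.Move, G.trans s mv = s'

/-- Three-step successor relation (the entry state of a cell gadget reaches the entry
states of its successor cells, and its choice state, in exactly three steps). -/
def Step3 (G : CGS) (s s' : G.State) : Prop :=
  ∃ x y : G.State, Step G s x ∧ Step G x y ∧ Step G y s'

/-- Reachability in a game structure. -/
def Reach (G : CGS) : G.State → G.State → Prop := Relation.ReflTransGen (Step G)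

/-!
Let `s` be the entry state (`m ∧ □`) of a cell. By (5) all two-step successors of `s`
coincide: if `s` led to two exit states, Player 2 could steer one branch to a `v₁`-cell
and the other to a `v₂`-cell, so neither `⟨∅⟩X³(c ∨ v₁)` nor `⟨∅⟩X³(c ∨ v₂)` would hold.
By (1)–(3) this exit state `y` is controlled by Player 2 and has a `v₁`- and a
`v₂`-successor. If `y` had two distinct `vᵢ`-successors `a ≠ b`, let Player 1 colour `b`
with `β` and every other cell with `α`. Player 2 can still reach an `α`-coloured `v₁`-cell
and an `α`-coloured `v₂`-cell (one of them being `a`), so (6) forces `α` four steps after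
`s` against every strategy of Player 2; moving from `y` to `b` gives `β` there instead,
and by (2) no `m`-state carries both colours.
-/

section Semantics

variable {G : CGS}

-- `Function.update` does not fit here: `Ctx G` does not unfold to a function type at
-- reducible transparency, so its simp lemmas never fire.
def Ctx.assign (ctx : Ctx G) (p : ℕ) (σ : G.State → G.Move) : Ctx G :=
  fun q => if q = p then some σ else ctx q

@[simp] lemma Ctx.assign_self (ctx : Ctx G) (p : ℕ) (σ : G.State → G.Move) :
    ctx.assign p σ p = some σ := if_pos rfl

@[simp] lemma Ctx.assign_of_ne {ctx : Ctx G} {p q : ℕ} (h : q ≠ p) (σ : G.State → G.Move) :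
    ctx.assign p σ q = ctx q := if_neg h

@[simp] lemma emptyCtx_apply (p : ℕ) : emptyCtx G p = none := rfl

lemma exists_step (s : G.State) : ∃ x, Step G s x :=
  ⟨_, fun _ => Classical.choice G.move_nonempty, rfl⟩

lemma Reach.tail {s t u : G.State} (hr : Reach G s t) (h : Step G t u) : Reach G s u :=
  Relation.ReflTransGen.tail hr h

lemma IsOutcome.step {ctx : Ctx G} {s : G.State} {π : ℕ → G.State}
    (hπ : IsOutcome G ctx s π) (i : ℕ) : Step G (π i) (π (i + 1)) :=
  let ⟨mv, _, h⟩ := hπ.2 i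
  ⟨mv, h.symm⟩

lemma exists_isOutcome (ctx : Ctx G) (s : G.State) : ∃ π, IsOutcome G ctx s π := by
  let mvAt : G.State → ℕ → G.Move := fun v p =>
    (ctx p).elim (Classical.choice G.move_nonempty) (· v)
  let next : G.State → G.State := fun v => G.trans v (mvAt v)
  exact ⟨fun n => next^[n] s, rfl, fun i =>
    ⟨mvAt (next^[i] s), fun p σ h => by simp [mvAt, h], Function.iterate_succ_apply' _ _ _⟩⟩

lemma IsOutcome.cons {ctx : Ctx G} {s x : G.State} {π : ℕ → G.State} {mv : ℕ → G.Move}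
    (hπ : IsOutcome G ctx x π) (hmv : ∀ p σ, ctx p = some σ → mv p = σ s)
    (hx : G.trans s mv = x) : IsOutcome G ctx s (Stream'.cons s π) := by
  refine ⟨rfl, fun i => ?_⟩
  cases i with
  | zero => exact ⟨mv, hmv, by simp [Stream'.cons, hπ.1, hx]⟩
  | succ i => exact hπ.2 i

lemma IsOutcome.cons_assign {p : ℕ} {σ : G.State → G.Move} {s x : G.State} {π : ℕ → G.State}
    {mv : ℕ → G.Move} (hπ : IsOutcome G ((emptyCtx G).assign p σ) x π) (hmv : mv p = σ s)
    (hx : G.trans s mv = x) : IsOutcome G ((emptyCtx G).assign p σ) s (Stream'.cons s π) := by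
  refine hπ.cons (fun q σ' hq => ?_) hx
  by_cases hqp : q = p
  · subst hqp
    simp_all
  · simp [hqp] at hq

lemma IsOutcome.cons_of_controls {p q : ℕ} {σ : G.State → G.Move} {s x : G.State}
    {π : ℕ → G.State} (hπ : IsOutcome G ((emptyCtx G).assign p σ) x π)
    (hs : Controls G q s) (hqp : q ≠ p) (hx : Step G s x) :
    IsOutcome G ((emptyCtx G).assign p σ) s (Stream'.cons s π) := by
  obtain ⟨mv, rfl⟩ := hx
  exact hπ.cons_assign (Function.update_self _ _ _) (hs _ _ (Function.update_of_ne hqp _ _))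

lemma exists_isOutcome_of_step {s x : G.State} (h : Step G s x) :
    ∃ π, IsOutcome G (emptyCtx G) s π ∧ π 1 = x := by
  obtain ⟨mv, hmv⟩ := h
  obtain ⟨π, hπ⟩ := exists_isOutcome (emptyCtx G) x
  exact ⟨_, hπ.cons (by simp) hmv, hπ.1⟩

lemma exists_isOutcome_shift_eq_of_reach {s0 t : G.State} (hr : Reach G s0 t)
    {π : ℕ → G.State} (hπ : IsOutcome G (emptyCtx G) t π) :
    ∃ π0 j, IsOutcome G (emptyCtx G) s0 π0 ∧ (fun n => π0 (n + j)) = π := by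
  induction hr generalizing π with
  | refl => exact ⟨π, 0, hπ, rfl⟩
  | @tail b _ _ hstep ih =>
    obtain ⟨mv, hmv⟩ := hstep
    obtain ⟨π0, j, h0, hshift⟩ := ih (hπ.cons (by simp) hmv)
    refine ⟨π0, j + 1, h0, funext fun n => ?_⟩
    rw [← Nat.add_assoc, Nat.add_right_comm]
    exact congrFun hshift (n + 1)

def CanEnforce (G : CGS) (p : ℕ) (t : G.State) (P : G.State → Prop) : Prop :=
  ∃ a : G.Move, ∀ mv : ℕ → G.Move, mv p = a → P (G.trans t mv)

lemma Controls.forall_of_canEnforce {p q : ℕ} {t : G.State} {P : G.State → Prop}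
    (hc : Controls G p t) (hqp : q ≠ p) (h : CanEnforce G q t P) (mv : ℕ → G.Move) :
    P (G.trans t mv) := by
  obtain ⟨a, ha⟩ := h
  rw [← hc (Function.update mv q a) mv (Function.update_of_ne hqp.symm _ _)]
  exact ha _ (Function.update_self _ _ _)

lemma exists_strategy_of_canEnforce {p : ℕ} {Q P : G.State → Prop}
    (h : ∀ v, Q v → CanEnforce G p v P) :
    ∃ σ : G.State → G.Move, ∀ v, Q v → ∀ mv : ℕ → G.Move, mv p = σ v → P (G.trans v mv) := by
  classical
  exact ⟨fun v => if hv : Q v then (h v hv).choose else Classical.choice G.move_nonempty,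
    fun v hv mv hmv => (h v hv).choose_spec mv (hmv.trans (dif_pos hv))⟩

variable {ctx : Ctx G} {π : ℕ → G.State} {φ ψ : Formula}

@[simp] lemma sat_atom {n : ℕ} : sat G (atom n) ctx π ↔ G.label (π 0) n := Iff.rfl

@[simp] lemma sat_neg : sat G (neg φ) ctx π ↔ ¬ sat G φ ctx π := Iff.rfl

@[simp] lemma sat_conj : sat G (conj φ ψ) ctx π ↔ sat G φ ctx π ∧ sat G ψ ctx π := Iff.rfl

@[simp] lemma sat_next : sat G (next φ) ctx π ↔ sat G φ ctx (fun n => π (n + 1)) := Iff.rfl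

@[simp] lemma sat_fOr : sat G (fOr φ ψ) ctx π ↔ sat G φ ctx π ∨ sat G ψ ctx π := by
  simp [fOr, or_iff_not_and_not]

@[simp] lemma sat_fImp : sat G (fImp φ ψ) ctx π ↔ (sat G φ ctx π → sat G ψ ctx π) := by
  simp [fImp, imp_iff_not_or]

@[simp] lemma sat_fIff : sat G (fIff φ ψ) ctx π ↔ (sat G φ ctx π ↔ sat G ψ ctx π) := by
  simp [fIff, iff_iff_implies_and_implies]

@[simp] lemma sat_top : sat G top ctx π := by
  simp [top, em]

@[simp] lemma sat_bigAnd {l : List Formula} :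
    sat G (bigAnd l) ctx π ↔ ∀ φ ∈ l, sat G φ ctx π := by
  induction l with
  | nil => simp [bigAnd]
  | cons a l ih => simp [bigAnd, ← ih]

@[simp] lemma sat_bigOr {l : List Formula} :
    sat G (bigOr l) ctx π ↔ ∃ φ ∈ l, sat G φ ctx π := by
  induction l with
  | nil => simp [bigOr, bot]
  | cons a l ih => simp [bigOr, ← ih]

lemma sat_glob : sat G (glob φ) ctx π ↔ ∀ j, sat G φ ctx (fun n => π (n + j)) := by
  simp [glob, fut, sat]

lemma sat_Aq : sat G (Aq φ) ctx π ↔ ∀ π', IsOutcome G ctx (π 0) π' → sat G φ ctx π' := by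
  constructor
  · rintro ⟨ctx', hctx', -, h⟩
    obtain rfl : ctx' = ctx := funext fun p => hctx' p List.not_mem_nil
    exact h
  · exact fun h => ⟨ctx, fun _ _ => rfl, fun _ hp => absurd hp List.not_mem_nil, h⟩

lemma sat_Eq :
    sat G (Formula.Eq φ) ctx π ↔ ∃ π', IsOutcome G ctx (π 0) π' ∧ sat G φ ctx π' := by
  simp [Formula.Eq, sat_Aq]

lemma sat_D {p : ℕ} : sat G (D p φ) ctx π ↔ ∃ σ, ∀ π',
    IsOutcome G (ctx.assign p σ) (π 0) π' → sat G φ (ctx.assign p σ) π' := by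
  constructor
  · rintro ⟨ctx', hoff, hon, h⟩
    obtain ⟨σ, hσ⟩ := hon p (List.mem_singleton_self p)
    obtain rfl : ctx' = ctx.assign p σ := by
      funext q
      by_cases hq : q = p
      · subst hq
        rw [Ctx.assign_self, hσ]
      · rw [Ctx.assign_of_ne hq, hoff q (by simpa using hq)]
    exact ⟨σ, h⟩
  · rintro ⟨σ, h⟩
    refine ⟨_, fun q hq => Ctx.assign_of_ne (by simpa using hq) _, fun q hq => ⟨σ, ?_⟩, h⟩
    rw [List.mem_singleton.1 hq, Ctx.assign_self]

lemma sat_B {p : ℕ} : sat G (B p φ) ctx π ↔ ∀ σ, ∃ π',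
    IsOutcome G (ctx.assign p σ) (π 0) π' ∧ sat G φ (ctx.assign p σ) π' := by
  simp [B, sat_D]

lemma sat_D_next_atom {p n : ℕ} :
    sat G (D p (next (atom n))) (emptyCtx G) π ↔ CanEnforce G p (π 0) (G.label · n) := by
  rw [sat_D]
  constructor
  · rintro ⟨σ, h⟩
    refine ⟨σ (π 0), fun mv hmv => ?_⟩
    obtain ⟨π', hπ'⟩ := exists_isOutcome ((emptyCtx G).assign p σ) (G.trans (π 0) mv)
    have hnext : G.label (π' 0) n := h _ (hπ'.cons_assign hmv rfl)
    rwa [hπ'.1] at hnext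
  · rintro ⟨a, ha⟩
    refine ⟨fun _ => a, fun π' hπ' => ?_⟩
    obtain ⟨mv, hmv, hstep⟩ := hπ'.2 0
    simp only [sat, hstep, hπ'.1]
    exact ha mv (hmv p _ (Ctx.assign_self _ _ _))

lemma sat_Eq_next_atom {n : ℕ} :
    sat G (Formula.Eq (next (atom n))) (emptyCtx G) π ↔ ∃ z, Step G (π 0) z ∧ G.label z n := by
  rw [sat_Eq]
  constructor
  · rintro ⟨π', hπ', h⟩
    exact ⟨π' 1, hπ'.1 ▸ hπ'.step 0, h⟩
  · rintro ⟨z, hz, h⟩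
    obtain ⟨π', hπ', rfl⟩ := exists_isOutcome_of_step hz
    exact ⟨π', hπ', h⟩

lemma stateSat_bigAnd {s : G.State} {l : List Formula} :
    StateSat G s (bigAnd l) ↔ ∀ φ ∈ l, StateSat G s φ := by
  simp only [StateSat, StateSatCtx, sat_bigAnd]
  exact ⟨fun h φ hφ π hπ => h π hπ φ hφ, fun h π hπ φ hφ => h φ hφ π hπ⟩

lemma StateSat.sat_of_Aq_glob {s0 t : G.State} (h : StateSat G s0 (Aq (glob ψ)))
    (hr : Reach G s0 t) (hπ : IsOutcome G (emptyCtx G) t π) : sat G ψ (emptyCtx G) π := by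
  obtain ⟨π0, j, h0, rfl⟩ := exists_isOutcome_shift_eq_of_reach hr hπ
  exact sat_glob.1 (sat_Aq.1 (h π0 h0) π0 (by rwa [h0.1])) j

end Semantics

/-- `m ∧ □`: the entry state of a cell. -/
def IsEntry (G : CGS) (t : G.State) : Prop := G.label t 0 ∧ G.label t 6

/-- `m ∧ ○ ∧ ¬α ∧ ¬β`: the exit state of a cell. -/
def IsExit (G : CGS) (t : G.State) : Prop :=
  G.label t 0 ∧ G.label t 7 ∧ ¬ G.label t 4 ∧ ¬ G.label t 5

section Consequences

variable {G : CGS} {s0 t : G.State} {ts : TileSystem}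

lemma not_c_of_m (h1 : StateSat G s0 (phi1 ts)) (hr : Reach G s0 t) (hm : G.label t 0) :
    ¬ G.label t 1 := by
  simp only [phi1, stateSat_bigAnd, List.forall_mem_cons] at h1
  obtain ⟨π, hπ⟩ := exists_isOutcome (emptyCtx G) t
  obtain ⟨φ, hmem, hp⟩ := sat_bigOr.1 (h1.1.sat_of_Aq_glob hr hπ)
  obtain ⟨p, -, rfl⟩ := List.mem_map.1 hmem
  simp only [sat_conj, sat_bigAnd, List.forall_mem_map, List.mem_filter, sat_neg, sat_atom,
    hπ.1, decide_eq_true_eq] at hp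
  intro hc
  by_cases hp0 : p = 0
  · exact hp.2 1 ⟨by simp [APprime], by omega⟩ hc
  · exact hp.2 0 ⟨by simp [APprime], Ne.symm hp0⟩ hm

lemma canEnforce_two_of_circle (h1 : StateSat G s0 (phi1 ts)) (hr : Reach G s0 t)
    (hci : G.label t 7) {n : ℕ} (hn : n ∈ APall ts) {z : G.State} (hz : Step G t z)
    (hlz : G.label z n) : CanEnforce G 2 t (G.label · n) := by
  simp only [phi1, stateSat_bigAnd, List.forall_mem_cons] at h1
  obtain ⟨π, hπ⟩ := exists_isOutcome (emptyCtx G) t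
  have h := h1.2.2.2.1.sat_of_Aq_glob hr hπ
  simp only [psq, pci, sat_bigAnd, List.mem_cons, List.not_mem_nil, or_false, forall_eq_or_imp,
    sat_fIff, sat_atom, hπ.1, sat_neg, sat_fImp, List.mem_map, forall_exists_index, and_imp,
    forall_apply_eq_imp_iff₂, sat_Eq_next_atom, sat_D_next_atom, forall_eq] at h
  exact (h.2.2 hci n hn).1 ⟨z, hz, hlz⟩

lemma not_alpha_and_beta (h2 : StateSat G s0 (phi2 ts)) (hr : Reach G s0 t)
    (hm : G.label t 0) : ¬ (G.label t 4 ∧ G.label t 5) := by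
  simp only [phi2, stateSat_bigAnd, List.forall_mem_cons] at h2
  obtain ⟨π, hπ⟩ := exists_isOutcome (emptyCtx G) t
  have h := h2.1.sat_of_Aq_glob hr hπ
  simp only [pm, psq, pal, pbe, pci, sat_fImp, sat_atom, hπ.1, sat_fOr, sat_bigAnd, List.mem_cons,
    List.not_mem_nil, or_false, forall_eq_or_imp, sat_neg, forall_eq, sat_conj, not_and] at h
  tauto

lemma isEntry_of_v1_or_v2 (h2 : StateSat G s0 (phi2 ts)) (hr : Reach G s0 t)
    (hv : G.label t 2 ∨ G.label t 3) : IsEntry G t := by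
  simp only [phi2, stateSat_bigAnd, List.forall_mem_cons] at h2
  obtain ⟨π, hπ⟩ := exists_isOutcome (emptyCtx G) t
  have h := h2.2.1.sat_of_Aq_glob hr hπ
  simp only [pm, psq, pv1, pv2, sat_conj, sat_fImp, sat_atom, hπ.1, sat_fIff, sat_neg, and_imp,
    sat_fOr] at h
  exact h.2 hv

lemma not_v1_and_v2 (h2 : StateSat G s0 (phi2 ts)) (hr : Reach G s0 t) :
    ¬ (G.label t 2 ∧ G.label t 3) := by
  simp only [phi2, stateSat_bigAnd, List.forall_mem_cons] at h2
  obtain ⟨π, hπ⟩ := exists_isOutcome (emptyCtx G) t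
  have h := h2.2.1.sat_of_Aq_glob hr hπ
  simp only [pm, psq, pv1, pv2, sat_conj, sat_fImp, sat_atom, hπ.1, sat_fIff, sat_neg, and_imp,
    sat_fOr] at h
  tauto

lemma not_c_or_v2_of_v1 (h1 : StateSat G s0 (phi1 ts)) (h2 : StateSat G s0 (phi2 ts))
    (hr : Reach G s0 t) (hv : G.label t 2) : ¬ (G.label t 1 ∨ G.label t 3) := by
  rintro (hc | hv2)
  · exact not_c_of_m h1 hr (isEntry_of_v1_or_v2 h2 hr (Or.inl hv)).1 hc
  · exact not_v1_and_v2 h2 hr ⟨hv, hv2⟩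

lemma not_c_or_v1_of_v2 (h1 : StateSat G s0 (phi1 ts)) (h2 : StateSat G s0 (phi2 ts))
    (hr : Reach G s0 t) (hv : G.label t 3) : ¬ (G.label t 1 ∨ G.label t 2) := by
  rintro (hc | hv1)
  · exact not_c_of_m h1 hr (isEntry_of_v1_or_v2 h2 hr (Or.inr hv)).1 hc
  · exact not_v1_and_v2 h2 hr ⟨hv1, hv⟩

lemma cell_shape (h2 : StateSat G s0 (phi2 ts)) (hr : Reach G s0 t) (ht : IsEntry G t)
    {x : G.State} (hx : Step G t x) :
    G.label x 0 ∧ (G.label x 4 ∨ G.label x 5) ∧ ∀ y, Step G x y → IsExit G y := by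
  simp only [phi2, stateSat_bigAnd, List.forall_mem_cons] at h2
  obtain ⟨π, hπ⟩ := exists_isOutcome (emptyCtx G) t
  have h := h2.2.2.1.sat_of_Aq_glob hr hπ
  simp only [pm, psq, pci, pal, pbe, sat_fImp, sat_conj, sat_atom, hπ.1, sat_bigAnd, List.mem_cons,
    List.not_mem_nil, or_false, forall_eq_or_imp, sat_Aq, sat_next, zero_add, sat_fOr, forall_eq,
    sat_neg, and_imp] at h
  obtain ⟨πx, hπx, rfl⟩ := exists_isOutcome_of_step hx
  obtain ⟨hxm, -, hxc, hexit⟩ := (h ht.1 ht.2).1 πx hπx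
  refine ⟨hxm, hxc, fun y hy => ?_⟩
  obtain ⟨πy, hπy, rfl⟩ := exists_isOutcome_of_step hy
  exact hexit πy hπy

lemma canEnforce_alpha_and_beta (h2 : StateSat G s0 (phi2 ts)) (hr : Reach G s0 t)
    (ht : IsEntry G t) : CanEnforce G 1 t (G.label · 4) ∧ CanEnforce G 1 t (G.label · 5) := by
  simp only [phi2, stateSat_bigAnd, List.forall_mem_cons] at h2
  obtain ⟨π, hπ⟩ := exists_isOutcome (emptyCtx G) t
  have h := h2.2.2.1.sat_of_Aq_glob hr hπ
  simp only [pm, psq, pal, pbe, sat_fImp, sat_conj, sat_atom, hπ.1, sat_bigAnd, List.mem_cons,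
    List.not_mem_nil, or_false, forall_eq_or_imp, sat_D_next_atom, forall_eq, and_imp] at h
  exact (h ht.1 ht.2).2

lemma exists_step_v1_and_v2 (h3 : StateSat G s0 (phi3 ts)) (hr : Reach G s0 t)
    (ht : IsExit G t) : (∃ z, Step G t z ∧ G.label z 2) ∧ (∃ z, Step G t z ∧ G.label z 3) := by
  simp only [phi3, stateSat_bigAnd, List.forall_mem_cons] at h3
  obtain ⟨π, hπ⟩ := exists_isOutcome (emptyCtx G) t
  have h := h3.2.1.sat_of_Aq_glob hr hπ
  simp only [pm, pci, pal, pbe, pc, pv1, pv2, sat_fImp, sat_bigAnd, List.mem_cons, List.not_mem_nil,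
    or_false, forall_eq_or_imp, sat_atom, hπ.1, sat_neg, forall_eq, sat_Eq_next_atom, and_imp] at h
  obtain ⟨-, hv1, hv2, -⟩ := h ht.1 ht.2.1 ht.2.2.1 ht.2.2.2
  exact ⟨hv1, hv2⟩

lemma phi5_spec (h5 : StateSat G s0 phi5) (hr : Reach G s0 t) (ht : IsEntry G t)
    (σ : G.State → G.Move) :
    (∀ π, IsOutcome G ((emptyCtx G).assign 2 σ) t π → G.label (π 3) 1 ∨ G.label (π 3) 2) ∨
    (∀ π, IsOutcome G ((emptyCtx G).assign 2 σ) t π → G.label (π 3) 1 ∨ G.label (π 3) 3) := by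
  obtain ⟨ρ, hρ⟩ := exists_isOutcome (emptyCtx G) t
  have h := h5.sat_of_Aq_glob hr hρ
  simp only [pm, psq, X3, X2, pc, pv1, pv2, sat_fImp, sat_conj, sat_atom, hρ.1, sat_B, sat_fOr,
    sat_Aq, sat_next, zero_add, Nat.reduceAdd, and_imp] at h
  obtain ⟨ρ', hρ', h'⟩ := h ht.1 ht.2 σ
  rwa [hρ'.1] at h'

lemma phi6_spec (h6 : StateSat G s0 phi6) (hr : Reach G s0 t) (ht : IsEntry G t)
    (σ₁ : G.State → G.Move)
    (hv1 : ∃ σ₂, ∀ π, IsOutcome G (((emptyCtx G).assign 1 σ₁).assign 2 σ₂) t π →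
      G.label (π 3) 2 ∧ G.label (π 4) 4)
    (hv2 : ∃ σ₂, ∀ π, IsOutcome G (((emptyCtx G).assign 1 σ₁).assign 2 σ₂) t π →
      G.label (π 3) 3 ∧ G.label (π 4) 4)
    (σ₂ : G.State → G.Move) (π : ℕ → G.State)
    (hπ : IsOutcome G (((emptyCtx G).assign 1 σ₁).assign 2 σ₂) t π) : G.label (π 4) 4 := by
  obtain ⟨ρ, hρ⟩ := exists_isOutcome (emptyCtx G) t
  have h := h6.sat_of_Aq_glob hr hρ
  simp only [pm, psq, X3, X2, pv1, pal, pv2, sat_fImp, sat_conj, sat_atom, hρ.1, sat_B, sat_D,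
    sat_next, zero_add, Nat.reduceAdd, sat_Aq, and_imp, forall_exists_index] at h
  obtain ⟨ρ', hρ', h'⟩ := h ht.1 ht.2 σ₁
  rw [hρ'.1] at h'
  obtain ⟨σa, ha⟩ := hv1
  obtain ⟨σb, hb⟩ := hv2
  obtain ⟨ρ'', hρ'', h''⟩ := h' σa ha σb hb σ₂
  rw [hρ''.1] at h''
  exact h'' π hπ

end Consequences

section Cells

variable {G : CGS} {s0 s t : G.State} {ts : TileSystem}

lemma controls_one_of_isEntry (h2 : StateSat G s0 (phi2 ts)) (hTB : TurnBased G)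
    (hr : Reach G s0 t) (ht : IsEntry G t) : Controls G 1 t := by
  obtain ⟨p, hp⟩ := hTB t
  by_cases hp1 : p = 1
  · exact hp1 ▸ hp
  obtain ⟨hα, hβ⟩ := canEnforce_alpha_and_beta h2 hr ht
  obtain ⟨_, mv, rfl⟩ := exists_step t
  have hx : Step G t (G.trans t mv) := ⟨mv, rfl⟩
  exact absurd ⟨hp.forall_of_canEnforce (Ne.symm hp1) hα mv,
    hp.forall_of_canEnforce (Ne.symm hp1) hβ mv⟩
    (not_alpha_and_beta h2 (hr.tail hx) (cell_shape h2 hr ht hx).1)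

lemma controls_two_of_isExit (h1 : StateSat G s0 (phi1 ts)) (h2 : StateSat G s0 (phi2 ts))
    (h3 : StateSat G s0 (phi3 ts)) (hTB : TurnBased G) (hr : Reach G s0 t)
    (ht : IsExit G t) : Controls G 2 t := by
  obtain ⟨p, hp⟩ := hTB t
  by_cases hp2 : p = 2
  · exact hp2 ▸ hp
  obtain ⟨⟨z1, hz1, hl1⟩, ⟨z2, hz2, hl2⟩⟩ := exists_step_v1_and_v2 h3 hr ht
  have hv1 := hp.forall_of_canEnforce (Ne.symm hp2)
    (canEnforce_two_of_circle h1 hr ht.2.1 (by simp [APall]) hz1 hl1)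
  have hv2 := hp.forall_of_canEnforce (Ne.symm hp2)
    (canEnforce_two_of_circle h1 hr ht.2.1 (by simp [APall]) hz2 hl2)
  obtain ⟨mv, rfl⟩ := hz1
  exact (not_v1_and_v2 h2 (hr.tail ⟨mv, rfl⟩) ⟨hv1 mv, hv2 mv⟩).elim

lemma exists_step_ne (h2 : StateSat G s0 (phi2 ts)) (hr : Reach G s0 s) (hs : IsEntry G s)
    (x : G.State) : ∃ x', Step G s x' ∧ x' ≠ x := by
  obtain ⟨⟨a, ha⟩, ⟨b, hb⟩⟩ := canEnforce_alpha_and_beta h2 hr hs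
  have hxa : Step G s (G.trans s fun _ => a) := ⟨_, rfl⟩
  have hxb : Step G s (G.trans s fun _ => b) := ⟨_, rfl⟩
  by_cases hx : (G.trans s fun _ => a) = x
  · refine ⟨_, hxb, fun hbx => ?_⟩
    rw [← hbx] at hx
    exact not_alpha_and_beta h2 (hr.tail hxb) (cell_shape h2 hr hs hxb).1
      ⟨hx ▸ ha _ rfl, hb _ rfl⟩
  · exact ⟨_, hxa, hx⟩

lemma exit_eq_of_step_ne (h1 : StateSat G s0 (phi1 ts)) (h2 : StateSat G s0 (phi2 ts))
    (h3 : StateSat G s0 (phi3 ts)) (h5 : StateSat G s0 phi5) (hTB : TurnBased G)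
    (hr : Reach G s0 s) (hs : IsEntry G s) {x w x' w' : G.State} (hx : Step G s x)
    (hw : Step G x w) (hx' : Step G s x') (hw' : Step G x' w') (hne : x ≠ x') : w = w' := by
  classical
  by_contra hww
  obtain ⟨-, hxc, hxe⟩ := cell_shape h2 hr hs hx
  obtain ⟨-, hx'c, hx'e⟩ := cell_shape h2 hr hs hx'
  have hrw := (hr.tail hx).tail hw
  have hrw' := (hr.tail hx').tail hw'
  obtain ⟨⟨z, ⟨mz, hmz⟩, hzl⟩, -⟩ := exists_step_v1_and_v2 h3 hrw (hxe w hw)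
  obtain ⟨-, ⟨z', ⟨mz', hmz'⟩, hz'l⟩⟩ := exists_step_v1_and_v2 h3 hrw' (hx'e w' hw')
  obtain ⟨mw, hmw⟩ := hw
  obtain ⟨mw', hmw'⟩ := hw'
  -- Middle states are coloured and exit states are not, so `σ` takes the intended value at
  -- each of `x`, `x'`, `w`, `w'`.
  let σ : G.State → G.Move := fun v =>
    if G.label v 4 ∨ G.label v 5 then (if v = x then mw 2 else mw' 2)
    else (if v = w then mz 2 else mz' 2)
  have hσx : mw 2 = σ x := by simp [σ, hxc]
  have hσx' : mw' 2 = σ x' := by simp [σ, hx'c, Ne.symm hne]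
  have hσw : mz 2 = σ w := by simp [σ, (hxe _ ⟨mw, hmw⟩).2.2]
  have hσw' : mz' 2 = σ w' := by simp [σ, (hx'e _ ⟨mw', hmw'⟩).2.2, Ne.symm hww]
  have hc1 := controls_one_of_isEntry h2 hTB hr hs
  obtain ⟨π, hπ⟩ := exists_isOutcome ((emptyCtx G).assign 2 σ) z
  obtain ⟨π', hπ'⟩ := exists_isOutcome ((emptyCtx G).assign 2 σ) z'
  have hA := ((hπ.cons_assign hσw hmz).cons_assign hσx hmw).cons_of_controls hc1 (by decide) hx
  have hB :=
    ((hπ'.cons_assign hσw' hmz').cons_assign hσx' hmw').cons_of_controls hc1 (by decide) hx'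
  rcases phi5_spec h5 hr hs σ with h | h
  · exact not_c_or_v1_of_v2 h1 h2 (hrw'.tail ⟨mz', hmz'⟩) hz'l
      (hπ'.1 ▸ (h _ hB : G.label (π' 0) 1 ∨ G.label (π' 0) 2))
  · exact not_c_or_v2_of_v1 h1 h2 (hrw.tail ⟨mz, hmz⟩) hzl
      (hπ.1 ▸ (h _ hA : G.label (π 0) 1 ∨ G.label (π 0) 3))

lemma exit_unique (h1 : StateSat G s0 (phi1 ts)) (h2 : StateSat G s0 (phi2 ts))
    (h3 : StateSat G s0 (phi3 ts)) (h5 : StateSat G s0 phi5) (hTB : TurnBased G)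
    (hr : Reach G s0 s) (hs : IsEntry G s) {x w x' w' : G.State} (hx : Step G s x)
    (hw : Step G x w) (hx' : Step G s x') (hw' : Step G x' w') : w = w' := by
  by_cases hne : x = x'
  · subst hne
    obtain ⟨x'', hx'', hne⟩ := exists_step_ne h2 hr hs x
    obtain ⟨w'', hw''⟩ := exists_step x''
    rw [exit_eq_of_step_ne h1 h2 h3 h5 hTB hr hs hx hw hx'' hw'' (Ne.symm hne),
      exit_eq_of_step_ne h1 h2 h3 h5 hTB hr hs hx hw' hx'' hw'' (Ne.symm hne)]
  · exact exit_eq_of_step_ne h1 h2 h3 h5 hTB hr hs hx hw hx' hw' hne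

lemma exists_step_ne_of_label (h2 : StateSat G s0 (phi2 ts)) (h3 : StateSat G s0 (phi3 ts))
    {y : G.State} (hry : Reach G s0 y) (hye : IsExit G y) {ℓ ℓ' : ℕ} (hℓ : ℓ = 2 ∨ ℓ = 3)
    (hℓ' : ℓ' = 2 ∨ ℓ' = 3) {a b : G.State} (ha : Step G y a) (hb : Step G y b)
    (hla : G.label a ℓ) (hlb : G.label b ℓ) (hab : a ≠ b) :
    ∃ c, Step G y c ∧ c ≠ b ∧ G.label c ℓ' := by
  by_cases hsame : ℓ' = ℓ
  · exact ⟨a, ha, hab, hsame ▸ hla⟩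
  obtain ⟨c, hc, hlc⟩ : ∃ c, Step G y c ∧ G.label c ℓ' := by
    rcases hℓ' with rfl | rfl
    exacts [(exists_step_v1_and_v2 h3 hry hye).1, (exists_step_v1_and_v2 h3 hry hye).2]
  refine ⟨c, hc, fun hcb => not_v1_and_v2 h2 (hry.tail hb) ?_, hlc⟩
  subst hcb
  rcases hℓ with rfl | rfl <;> rcases hℓ' with rfl | rfl <;> simp_all

lemma outcome_three_four_of_exit_unique {y : G.State}
    (hsy : ∀ x w, Step G s x → Step G x w → w = y) (hy : Controls G 2 y)
    {σ₁ : G.State → G.Move} {mv : ℕ → G.Move} {π : ℕ → G.State}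
    (hπ : IsOutcome G (((emptyCtx G).assign 1 σ₁).assign 2 fun _ => mv 2) s π) :
    π 3 = G.trans y mv ∧ ∃ mv', mv' 1 = σ₁ (π 3) ∧ π 4 = G.trans (π 3) mv' := by
  have hπ2 : π 2 = y := hsy _ _ (hπ.1 ▸ hπ.step 0) (hπ.step 1)
  obtain ⟨m2, hm2, e2⟩ := hπ.2 2
  obtain ⟨m3, hm3, e3⟩ := hπ.2 3
  refine ⟨?_, m3, hm3 1 σ₁ (by simp), e3⟩
  rw [e2, hπ2]
  exact hy _ _ (hm2 2 _ (Ctx.assign_self _ _ _))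

lemma exit_succ_eq_of_label (h1 : StateSat G s0 (phi1 ts)) (h2 : StateSat G s0 (phi2 ts))
    (h3 : StateSat G s0 (phi3 ts)) (h6 : StateSat G s0 phi6) (hTB : TurnBased G)
    (hr : Reach G s0 s) (hs : IsEntry G s) {y : G.State}
    (hsy : ∀ x w, Step G s x → Step G x w → w = y) (hry : Reach G s0 y) (hye : IsExit G y)
    {ℓ : ℕ} (hℓ : ℓ = 2 ∨ ℓ = 3) {a b : G.State} (ha : Step G y a) (hb : Step G y b)
    (hla : G.label a ℓ) (hlb : G.label b ℓ) : a = b := by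
  classical
  by_contra hab
  have hy := controls_two_of_isExit h1 h2 h3 hTB hry hye
  have hentry : ∀ c, Step G y c → (G.label c 2 ∨ G.label c 3) → Reach G s0 c ∧ IsEntry G c :=
    fun c hc hv => ⟨hry.tail hc, isEntry_of_v1_or_v2 h2 (hry.tail hc) hv⟩
  obtain ⟨σα, hσα⟩ := exists_strategy_of_canEnforce fun v (hv : Reach G s0 v ∧ IsEntry G v) =>
    (canEnforce_alpha_and_beta h2 hv.1 hv.2).1
  obtain ⟨σβ, hσβ⟩ := exists_strategy_of_canEnforce fun v (hv : Reach G s0 v ∧ IsEntry G v) =>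
    (canEnforce_alpha_and_beta h2 hv.1 hv.2).2
  let σ₁ := Function.update σα b (σβ b)
  have hα : ∀ ℓ', (ℓ' = 2 ∨ ℓ' = 3) → ∃ σ₂, ∀ π,
      IsOutcome G (((emptyCtx G).assign 1 σ₁).assign 2 σ₂) s π →
        G.label (π 3) ℓ' ∧ G.label (π 4) 4 := by
    intro ℓ' hℓ'
    obtain ⟨c, ⟨mc, rfl⟩, hcb, hlc⟩ :=
      exists_step_ne_of_label h2 h3 hry hye hℓ hℓ' ha hb hla hlb hab
    refine ⟨fun _ => mc 2, fun π hπ => ?_⟩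
    obtain ⟨h3eq, mv, hmv, h4eq⟩ := outcome_three_four_of_exit_unique hsy hy hπ
    rw [h3eq] at hmv h4eq ⊢
    refine ⟨hlc, h4eq ▸ hσα _ (hentry _ ⟨mc, rfl⟩ ?_) mv
      (hmv.trans (Function.update_of_ne hcb _ _))⟩
    rcases hℓ' with rfl | rfl
    exacts [Or.inl hlc, Or.inr hlc]
  obtain ⟨mb, rfl⟩ := hb
  obtain ⟨π, hπ⟩ := exists_isOutcome (((emptyCtx G).assign 1 σ₁).assign 2 fun _ => mb 2) s
  have hα4 := phi6_spec h6 hr hs σ₁ (hα 2 (Or.inl rfl)) (hα 3 (Or.inr rfl)) _ π hπ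
  obtain ⟨h3eq, mv, hmv, h4eq⟩ := outcome_three_four_of_exit_unique hsy hy hπ
  rw [h3eq] at hmv h4eq
  obtain ⟨hrb, hbe⟩ :=
    hentry _ ⟨mb, rfl⟩ (by rcases hℓ with rfl | rfl; exacts [Or.inl hlb, Or.inr hlb])
  have hβ4 : G.label (π 4) 5 :=
    h4eq ▸ hσβ _ ⟨hrb, hbe⟩ mv (hmv.trans (Function.update_self _ _ _))
  rw [h4eq] at hα4 hβ4
  exact not_alpha_and_beta h2 (hrb.tail ⟨mv, rfl⟩) (cell_shape h2 hrb hbe ⟨mv, rfl⟩).1 ⟨hα4, hβ4⟩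

end Cells

theorem formula6_forces_exactly_two_successor_cells_general (ts : TileSystem) (G : CGS)
    (s0 : G.State) (hTB : TurnBased G)
    (h1 : StateSat G s0 (phi1 ts)) (h2 : StateSat G s0 (phi2 ts))
    (h3 : StateSat G s0 (phi3 ts))
    (h5 : StateSat G s0 phi5) (h6 : StateSat G s0 phi6) :
    ∀ s, Reach G s0 s → G.label s 0 → G.label s 6 →
      ∃ u1 u2 : G.State, Step3 G s u1 ∧ Step3 G s u2 ∧
        G.label u1 2 ∧ G.label u2 3 ∧
        ∀ u, Step3 G s u → (G.label u 2 ∨ G.label u 3) → u = u1 ∨ u = u2 := by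
  intro s hr hm hsq
  have hs : IsEntry G s := ⟨hm, hsq⟩
  obtain ⟨x, hx⟩ := exists_step s
  obtain ⟨y, hy⟩ := exists_step x
  have hsy : ∀ x' w, Step G s x' → Step G x' w → w = y :=
    fun _ _ hx' hw => exit_unique h1 h2 h3 h5 hTB hr hs hx' hw hx hy
  have hry : Reach G s0 y := (hr.tail hx).tail hy
  have hye : IsExit G y := (cell_shape h2 hr hs hx).2.2 y hy
  obtain ⟨⟨u1, hu1, hl1⟩, ⟨u2, hu2, hl2⟩⟩ := exists_step_v1_and_v2 h3 hry hye
  refine ⟨u1, u2, ⟨x, y, hx, hy, hu1⟩, ⟨x, y, hx, hy, hu2⟩, hl1, hl2, ?_⟩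
  rintro u ⟨x', w, hx', hw, hu⟩ hl
  obtain rfl := hsy x' w hx' hw
  rcases hl with hl | hl
  · exact Or.inl
      (exit_succ_eq_of_label h1 h2 h3 h6 hTB hr hs hsy hry hye (Or.inl rfl) hu hu1 hl hl1)
  · exact Or.inr
      (exit_succ_eq_of_label h1 h2 h3 h6 hTB hr hs hsy hry hye (Or.inr rfl) hu hu2 hl hl2)

/-- **Theorem.** In any turn-based game structure satisfying formulas (1)–(5) of the
reduction, formula (6), `AG[(m ∧ □) ⇒ [1]((⟨2⟩X³(v₁ ∧ Xα) ∧ ⟨2⟩X³(v₂ ∧ Xα)) ⇒ [2]⟨∅⟩X³Xα)]`,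
forces every cell of the grid to have exactly two successor cells: one whose entry
state is labelled `v₁` and one whose entry state is labelled `v₂` (entry states of
successor cells are the states reached in three steps that carry `v₁` or `v₂`). -/
theorem formula6_forces_exactly_two_successor_cells (ts : TileSystem) (G : CGS)
    (s0 : G.State) (hTB : TurnBased G)
    (h1 : StateSat G s0 (phi1 ts)) (h2 : StateSat G s0 (phi2 ts))
    (h3 : StateSat G s0 (phi3 ts)) (h4 : StateSat G s0 (phi4 ts))
    (h5 : StateSat G s0 phi5) (h6 : StateSat G s0 phi6) :
    ∀ s, Reach G s0 s → G.label s 0 → G.label s 6 →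
      ∃ u1 u2 : G.State, Step3 G s u1 ∧ Step3 G s u2 ∧
        G.label u1 2 ∧ G.label u2 3 ∧
        ∀ u, Step3 G s u → (G.label u 2 ∨ G.label u 3) → u = u1 ∨ u = u2 :=
  formula6_forces_exactly_two_successor_cells_general ts G s0 hTB h1 h2 h3 h5 h6
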